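/- (H^{−1} bound for the damped oscillation.) There exists a constant C > 0 such that for every γ ∈ (0, 1) and every integer n with |n| ≥ 1, ∫_ℝ (1 + ξ²)^{−1} ( γ n² / ((ξ + n²)² + (γ n²)²) )² dξ ≤ C ( γ² / n⁴ + 1/(γ n⁶) ). -/
import Mathlib


open MeasureTheory Real

lemma base_integrable {b : ℝ} (hb : 0 < b) :
    Integrable (fun x : ℝ => (x^2 + b^2)⁻¹) := by
  have hbne : b ≠ 0 := hb.ne'
  have h1 : Integrable (fun x : ℝ => (1 + (b⁻¹*x)^2)⁻¹) :=
    integrable_inv_one_add_sq.comp_mul_left' (inv_ne_zero hbne)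
  have h2 := h1.const_mul ((b^2)⁻¹)
  have heq : (fun x : ℝ => (x^2 + b^2)⁻¹) = fun x => (b^2)⁻¹ * (1 + (b⁻¹*x)^2)⁻¹ := by
    funext x
    rw [← mul_inv]
    congr 1
    field_simp
    ring
  rw [heq]
  exact h2

lemma lorentz_integrable {b : ℝ} (hb : 0 < b) (c : ℝ) :
    Integrable (fun ξ : ℝ => ((ξ + c)^2 + b^2)⁻¹) := by
  have := (measurePreserving_add_right volume c).integrable_comp_emb
    (measurableEmbedding_addRight c) (g := fun x : ℝ => (x^2 + b^2)⁻¹)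
  exact this.mpr (base_integrable hb)

lemma lorentz_integral {b : ℝ} (hb : 0 < b) (c : ℝ) :
    (∫ ξ : ℝ, ((ξ + c)^2 + b^2)⁻¹) = π / b := by
  have hbne : b ≠ 0 := hb.ne'
  have hshift : (∫ ξ : ℝ, ((ξ + c)^2 + b^2)⁻¹)
      = ∫ ξ : ℝ, (ξ^2 + b^2)⁻¹ :=
    integral_add_right_eq_self (fun x : ℝ => (x^2 + b^2)⁻¹) c
  rw [hshift]
  have hscale := MeasureTheory.Measure.integral_comp_mul_left
    (fun x : ℝ => (x^2 + b^2)⁻¹) b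
  have hlhs : (∫ x : ℝ, ((b*x)^2 + b^2)⁻¹) = (b^2)⁻¹ * π := by
    have heq : ∀ x : ℝ, ((b*x)^2 + b^2)⁻¹ = (b^2)⁻¹ * (1 + x^2)⁻¹ := by
      intro x
      rw [← mul_inv]
      congr 1
      ring
    simp_rw [heq]
    rw [MeasureTheory.integral_const_mul, integral_univ_inv_one_add_sq]
  rw [hlhs, abs_of_pos (inv_pos.mpr hb), smul_eq_mul] at hscale
  field_simp at hscale ⊢
  nlinarith [hscale, sq_nonneg b]

/-- `H^{-1}` bound for the damped oscillation: there is `C > 0` such that for every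
`γ ∈ (0,1)` and every integer `n` with `|n| ≥ 1`,
`∫ (1+ξ²)⁻¹ L_{γ,n}(ξ)² dξ ≤ C (γ²/n⁴ + 1/(γ n⁶))`. -/
theorem stmt8 :
    ∃ C > (0:ℝ), ∀ (γ : ℝ), γ ∈ Set.Ioo (0:ℝ) 1 → ∀ (n : ℤ), 1 ≤ |n| →
      (∫ ξ : ℝ, (1 + ξ^2)⁻¹ *
          ((γ * (n:ℝ)^2) / ((ξ + (n:ℝ)^2)^2 + (γ * (n:ℝ)^2)^2))^2)
        ≤ C * (γ^2 / (n:ℝ)^4 + 1 / (γ * (n:ℝ)^6)) := by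
  refine ⟨16 * π, by positivity, ?_⟩
  rintro γ ⟨hγ0, hγ1⟩ n hn
  set N : ℝ := (n:ℝ)^2 with hN
  have hN1 : (1:ℝ) ≤ N := by
    have h' : (1:ℝ) ≤ |(n:ℝ)| := by exact_mod_cast hn
    calc (1:ℝ) = 1^2 := by norm_num
    _ ≤ |(n:ℝ)|^2 := by gcongr
    _ = N := by rw [sq_abs]
  have hN0 : (0:ℝ) < N := lt_of_lt_of_le one_pos hN1
  set b : ℝ := γ * N with hbdef
  have hb : 0 < b := mul_pos hγ0 hN0
  -- majorant
  set h : ℝ → ℝ := fun ξ => (4 / N^2) * ((ξ + N)^2 + b^2)⁻¹ + (16 * b^2 / N^4) * (1 + ξ^2)⁻¹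
    with hh
  have hint : Integrable h := by
    apply Integrable.add
    · exact (lorentz_integrable hb N).const_mul _
    · exact integrable_inv_one_add_sq.const_mul _
  have hmono : ∀ ξ : ℝ, (1 + ξ^2)⁻¹ * (b / ((ξ + N)^2 + b^2))^2 ≤ h ξ := by
    intro ξ
    have hD : 0 < (ξ + N)^2 + b^2 := by positivity
    have hx : 0 < 1 + ξ^2 := by positivity
    rcases le_or_gt ((ξ + N)^2) (N^2/4) with hcase | hcase
    · -- near -N : (1+ξ²)⁻¹ small, Lorentzian² ≤ Lorentzian
      have hsq : (ξ+N)^2 ≤ (N/2)^2 := by nlinarith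
      obtain ⟨hl, hr⟩ := abs_le_of_sq_le_sq' hsq (by positivity)
      have hξ : ξ ≤ -N/2 := by linarith
      have hNξ : N * ξ ≤ N * (-N/2) := mul_le_mul_of_nonneg_left hξ hN0.le
      have h1 : (1 + ξ^2)⁻¹ ≤ 4 / N^2 := by
        rw [inv_eq_one_div, div_le_div_iff₀ hx (by positivity)]
        nlinarith [sq_nonneg (ξ + N/2)]
      have h2 : (b / ((ξ + N)^2 + b^2))^2 ≤ ((ξ + N)^2 + b^2)⁻¹ := by
        rw [div_pow, inv_eq_one_div, div_le_div_iff₀ (by positivity) hD]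
        nlinarith [sq_nonneg (ξ+N), mul_nonneg (sq_nonneg (ξ+N)) (sq_nonneg (ξ+N)),
          mul_nonneg (sq_nonneg (ξ+N)) (sq_nonneg b)]
      have hmul := mul_le_mul h1 h2 (by positivity) (by positivity)
      calc (1 + ξ^2)⁻¹ * (b / ((ξ + N)^2 + b^2))^2 ≤ (4 / N^2) * ((ξ + N)^2 + b^2)⁻¹ := hmul
      _ ≤ h ξ := by
        rw [hh]
        have : 0 ≤ (16 * b^2 / N^4) * (1 + ξ^2)⁻¹ := by positivity
        simp only []
        linarith
    · -- far from -N : Lorentzian² ≤ 16 b²/N⁴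
      have hD4 : N^2/4 ≤ (ξ+N)^2 + b^2 := by nlinarith [sq_nonneg b]
      have hDD : (N^2/4)^2 ≤ ((ξ+N)^2 + b^2)^2 := by
        apply pow_le_pow_left₀ (by positivity) hD4
      have h2 : (b / ((ξ + N)^2 + b^2))^2 ≤ 16 * b^2 / N^4 := by
        rw [div_pow, div_le_div_iff₀ (by positivity) (by positivity)]
        nlinarith [mul_le_mul_of_nonneg_left hDD (sq_nonneg b)]
      calc (1 + ξ^2)⁻¹ * (b / ((ξ + N)^2 + b^2))^2
          ≤ (1 + ξ^2)⁻¹ * (16 * b^2 / N^4) :=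
            mul_le_mul_of_nonneg_left h2 (by positivity)
      _ = (16 * b^2 / N^4) * (1 + ξ^2)⁻¹ := by ring
      _ ≤ h ξ := by
        rw [hh]
        have : 0 ≤ (4 / N^2) * ((ξ + N)^2 + b^2)⁻¹ := by positivity
        simp only []
        linarith
  have hbound : (∫ ξ : ℝ, (1 + ξ^2)⁻¹ * ((γ * N) / ((ξ + N)^2 + (γ * N)^2))^2)
      ≤ ∫ ξ : ℝ, h ξ := by
    apply integral_mono_of_nonneg
    · filter_upwards with ξ; positivity
    · exact hint
    · filter_upwards with ξ; exact hmono ξ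
  have hval : (∫ ξ : ℝ, h ξ) = (4 / N^2) * (π / b) + (16 * b^2 / N^4) * π := by
    rw [hh]
    rw [integral_add ((lorentz_integrable hb N).const_mul _)
      (integrable_inv_one_add_sq.const_mul _)]
    rw [MeasureTheory.integral_const_mul, MeasureTheory.integral_const_mul,
      lorentz_integral hb N, integral_univ_inv_one_add_sq]
  have hfinal : (4 / N^2) * (π / b) + (16 * b^2 / N^4) * π
      ≤ 16 * π * (γ^2 / (n:ℝ)^4 + 1 / (γ * (n:ℝ)^6)) := by
    have hn4 : ((n:ℝ))^4 = N^2 := by rw [hN]; ring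
    have hn6 : ((n:ℝ))^6 = N^3 := by rw [hN]; ring
    rw [hn4, hn6, hbdef]
    have e1 : (4 / N^2) * (π / (γ * N)) = 4 * π * (1 / (γ * N^3)) := by
      field_simp
    have e2 : (16 * (γ*N)^2 / N^4) * π = 16 * π * (γ^2 / N^2) := by
      field_simp
    rw [e1, e2]
    have hp : 0 < 1 / (γ * N^3) := by positivity
    have hq : 0 ≤ γ^2 / N^2 := by positivity
    nlinarith [pi_pos]
  calc (∫ ξ : ℝ, (1 + ξ^2)⁻¹ * ((γ * (n:ℝ)^2) / ((ξ + (n:ℝ)^2)^2 + (γ * (n:ℝ)^2)^2))^2)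
      = (∫ ξ : ℝ, (1 + ξ^2)⁻¹ * ((γ * N) / ((ξ + N)^2 + (γ * N)^2))^2) := by rw [hN]
  _ ≤ ∫ ξ : ℝ, h ξ := hbound
  _ = (4 / N^2) * (π / b) + (16 * b^2 / N^4) * π := hval
  _ ≤ 16 * π * (γ^2 / (n:ℝ)^4 + 1 / (γ * (n:ℝ)^6)) := hfinal
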